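/- Let Y be an M-ideal in a Banach space X (so X* = Y^⊥ ⊕_1 Z with Z isometric to Y*). If y* ∈ S(Y*) is a w*-w point of continuity of Y*_1, then, regarded as an element of S(X*) via the isometric identification, y* is a w*-w point of continuity of X*_1. -/

import Mathlib

open NormedSpace Filter Topology

/-- `x*` in the dual unit ball is a *w\*-w point of continuity*: every net (filter) in the
dual unit ball converging weak\* to `x*` converges weakly to `x*`. -/
def IsWStarWPC {E : Type*} [NormedAddCommGroup E] [NormedSpace ℝ E]
    (x : StrongDual ℝ E) : Prop :=
  ∀ l : Filter (StrongDual ℝ E), l.NeBot → (∀ᶠ φ in l, ‖φ‖ ≤ 1) →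
    (∀ v : E, Tendsto (fun φ : StrongDual ℝ E => φ v) l (𝓝 (x v))) →
    ∀ Λ : StrongDual ℝ (StrongDual ℝ E), Tendsto (fun φ : StrongDual ℝ E => Λ φ) l (𝓝 (Λ x))

/-!
Write `φ|_Y` for the restriction of `φ ∈ X*` to `Y`. Composing `P` with Hahn–Banach extension
gives a bounded linear map `Y* → X*` sending `φ|_Y` to `P φ`, so the w\*-w continuity of `Y*_1`
at `x|_Y` makes `Λ (P φ) → Λ x` along any bounded net `φ → x` weak\*. The complementary parts
`φ - P φ` tend to zero in norm: by the L-decomposition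
`‖φ - P φ‖ = ‖φ‖ - ‖P φ‖ ≤ 1 - ‖φ|_Y‖`, and `‖φ|_Y‖` is eventually close to `‖x|_Y‖ = 1` from
below by weak\* lower semicontinuity of the norm.
-/

theorem ContinuousLinearMap.eventually_lt_opNorm_of_tendsto_apply
    {𝕜 E F α : Type*} [DenselyNormedField 𝕜] [NormedAddCommGroup E] [NormedSpace 𝕜 E]
    [SeminormedAddCommGroup F] [NormedSpace 𝕜 F]
    {l : Filter α} {φ : α → E →L[𝕜] F} {f : E →L[𝕜] F}
    (h : ∀ v, Tendsto (fun a => φ a v) l (𝓝 (f v))) {r : ℝ} (hr : r < ‖f‖) :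
    ∀ᶠ a in l, r < ‖φ a‖ := by
  obtain ⟨v, hv, hrv⟩ := f.exists_lt_apply_of_lt_opNorm hr
  filter_upwards [(h v).norm.eventually (eventually_gt_nhds hrv)] with a ha
  calc r < ‖φ a v‖ := ha
    _ ≤ ‖φ a‖ := by simpa using (φ a).le_opNorm_of_le hv.le

section MIdeal

variable {𝕜 X : Type*} [RCLike 𝕜] [NormedAddCommGroup X] [NormedSpace 𝕜 X]
  {Y : Submodule 𝕜 X} {P : StrongDual 𝕜 X →L[𝕜] StrongDual 𝕜 X}

theorem norm_comp_subtypeL_le (f : StrongDual 𝕜 X) : ‖f.comp Y.subtypeL‖ ≤ ‖f‖ :=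
  (f.comp Y.subtypeL).opNorm_le_bound (norm_nonneg f) fun y => f.le_opNorm y

theorem map_eq_map_of_comp_subtypeL_eq (hker : ∀ f, (∀ y ∈ Y, f y = 0) → P f = 0)
    {f g : StrongDual 𝕜 X} (h : f.comp Y.subtypeL = g.comp Y.subtypeL) : P f = P g := by
  rw [← sub_eq_zero, ← map_sub]
  exact hker _ fun y hy => by simpa [sub_eq_zero] using congr($h ⟨y, hy⟩)

theorem comp_subtypeL_map (hproj : ∀ f, P (P f) = P f) (hker : ∀ f, P f = 0 → ∀ y ∈ Y, f y = 0)
    (f : StrongDual 𝕜 X) : (P f).comp Y.subtypeL = f.comp Y.subtypeL := by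
  ext y
  exact (sub_eq_zero.1 (hker (f - P f) (by rw [map_sub, hproj, sub_self]) y y.2)).symm

theorem comp_subtypeL_extension (ψ : StrongDual 𝕜 Y) :
    (exists_extension_norm_eq Y ψ).choose.comp Y.subtypeL = ψ :=
  ContinuousLinearMap.ext (exists_extension_norm_eq Y ψ).choose_spec.1

variable (Y P) in
noncomputable def liftDual (hker : ∀ f, (∀ y ∈ Y, f y = 0) → P f = 0) :
    StrongDual 𝕜 Y →L[𝕜] StrongDual 𝕜 X :=
  LinearMap.mkContinuous
    { toFun := fun ψ => P (exists_extension_norm_eq Y ψ).choose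
      map_add' := fun ψ₁ ψ₂ => by
        rw [← map_add]
        refine map_eq_map_of_comp_subtypeL_eq hker ?_
        simp only [ContinuousLinearMap.add_comp, comp_subtypeL_extension]
      map_smul' := fun c ψ => by
        rw [RingHom.id_apply, ← map_smul]
        refine map_eq_map_of_comp_subtypeL_eq hker ?_
        simp only [ContinuousLinearMap.smul_comp, comp_subtypeL_extension] }
    ‖P‖ fun ψ =>
      (P.le_opNorm _).trans_eq (by rw [(exists_extension_norm_eq Y ψ).choose_spec.2])

theorem liftDual_comp_subtypeL (hker : ∀ f, (∀ y ∈ Y, f y = 0) → P f = 0)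
    (f : StrongDual 𝕜 X) : liftDual Y P hker (f.comp Y.subtypeL) = P f :=
  map_eq_map_of_comp_subtypeL_eq hker (comp_subtypeL_extension _)

theorem norm_map_le_norm_comp_subtypeL (hker : ∀ f, (∀ y ∈ Y, f y = 0) → P f = 0)
    (hPle : ∀ f, ‖P f‖ ≤ ‖f‖) (f : StrongDual 𝕜 X) : ‖P f‖ ≤ ‖f.comp Y.subtypeL‖ := by
  obtain ⟨g, hg, hgnorm⟩ := exists_extension_norm_eq Y (f.comp Y.subtypeL)
  rw [map_eq_map_of_comp_subtypeL_eq hker (ContinuousLinearMap.ext hg).symm, ← hgnorm]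
  exact hPle g

theorem tendsto_sub_map_nhds_zero (hproj : ∀ f, P (P f) = P f)
    (hker : ∀ f, P f = 0 → ∀ y ∈ Y, f y = 0) (hL : ∀ f, ‖f‖ = ‖P f‖ + ‖f - P f‖)
    {x : StrongDual 𝕜 X} (hx : ‖x.comp Y.subtypeL‖ = 1) {l : Filter (StrongDual 𝕜 X)}
    (hbd : ∀ᶠ φ in l, ‖φ‖ ≤ 1)
    (hw : ∀ v : Y, Tendsto (fun φ : StrongDual 𝕜 X => φ (v : X)) l (𝓝 (x v))) :
    Tendsto (fun φ => φ - P φ) l (𝓝 0) := by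
  rw [tendsto_zero_iff_norm_tendsto_zero, Metric.tendsto_nhds]
  intro ε hε
  have hlsc : ∀ᶠ φ in l, 1 - ε < ‖φ.comp Y.subtypeL‖ :=
    ContinuousLinearMap.eventually_lt_opNorm_of_tendsto_apply hw (by linarith)
  filter_upwards [hbd, hlsc] with φ hφ hφY
  have hres : ‖φ.comp Y.subtypeL‖ ≤ ‖P φ‖ := by
    simpa only [comp_subtypeL_map hproj hker] using norm_comp_subtypeL_le (Y := Y) (P φ)
  rw [Real.dist_0_eq_abs, abs_norm]
  linarith [hL φ]

end MIdeal

theorem tendsto_map_of_isWStarWPC_comp_subtypeL {X : Type*} [NormedAddCommGroup X]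
    [NormedSpace ℝ X] {Y : Submodule ℝ X} {P : StrongDual ℝ X →L[ℝ] StrongDual ℝ X}
    (hker : ∀ f, (∀ y ∈ Y, f y = 0) → P f = 0) {x : StrongDual ℝ X}
    (hYpc : IsWStarWPC (x.comp Y.subtypeL)) {l : Filter (StrongDual ℝ X)} (hl : l.NeBot)
    (hbd : ∀ᶠ φ in l, ‖φ‖ ≤ 1)
    (hw : ∀ v : Y, Tendsto (fun φ : StrongDual ℝ X => φ (v : X)) l (𝓝 (x v)))
    (Λ : StrongDual ℝ (StrongDual ℝ X)) :
    Tendsto (fun φ => Λ (P φ)) l (𝓝 (Λ (P x))) := by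
  have h := hYpc (l.map fun φ : StrongDual ℝ X => φ.comp Y.subtypeL) (hl.map _)
    (eventually_map.2 <| hbd.mono fun φ hφ => (norm_comp_subtypeL_le (Y := Y) φ).trans hφ)
    (fun v => tendsto_map'_iff.2 (hw v)) (Λ.comp (liftDual Y P hker))
  simpa [Function.comp_def, liftDual_comp_subtypeL] using h

theorem isWStarWPC_of_isWStarWPC_of_MIdeal_general
    {X : Type*} [NormedAddCommGroup X] [NormedSpace ℝ X]
    (Y : Submodule ℝ X)
    (P : StrongDual ℝ X →L[ℝ] StrongDual ℝ X)
    (hproj : ∀ f : StrongDual ℝ X, P (P f) = P f)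
    (hker : ∀ f : StrongDual ℝ X, P f = 0 ↔ ∀ y ∈ Y, f y = 0)
    (hL : ∀ f : StrongDual ℝ X, ‖f‖ = ‖P f‖ + ‖f - P f‖)
    (x : StrongDual ℝ X) (hx : ‖x‖ = 1) (hPx : P x = x)
    (hYpc : IsWStarWPC (x.comp Y.subtypeL)) :
    IsWStarWPC x := by
  intro l hl hbd hw Λ
  have hPle : ∀ f, ‖P f‖ ≤ ‖f‖ := fun f => by linarith [hL f, norm_nonneg (f - P f)]
  have hxY : ‖x.comp Y.subtypeL‖ = 1 := by
    refine le_antisymm ((norm_comp_subtypeL_le x).trans hx.le) ?_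
    simpa only [hPx, hx] using norm_map_le_norm_comp_subtypeL (fun f => (hker f).2) hPle x
  have hrange : Tendsto (fun φ => Λ (P φ)) l (𝓝 (Λ x)) := by
    simpa only [hPx] using
      tendsto_map_of_isWStarWPC_comp_subtypeL (fun f => (hker f).2) hYpc hl hbd (fun v => hw v) Λ
  have hcompl : Tendsto (fun φ => Λ (φ - P φ)) l (𝓝 0) :=
    (Λ.continuous.tendsto' 0 0 (map_zero Λ)).comp
      (tendsto_sub_map_nhds_zero hproj (fun f => (hker f).1) hL hxY hbd fun v => hw v)
  simpa using hrange.add hcompl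

/-- **w\*-w PCs lift through M-ideals.**  Let `Y` be an M-ideal in a Banach space `X`, via a
norm-one projection `P` on `X*` with `ker P = Y^⊥` and `‖f‖ = ‖P f‖ + ‖f - P f‖`.  If
`x* ∈ S(X*)` lies in the range of `P` (i.e. is the element of `Y* ≅ range P` corresponding
to a functional on `Y`) and its restriction to `Y` is a w\*-w point of continuity of the
unit ball of `Y*`, then `x*` is a w\*-w point of continuity of the unit ball of `X*`. -/
theorem isWStarWPC_of_isWStarWPC_of_MIdeal
    {X : Type*} [NormedAddCommGroup X] [NormedSpace ℝ X] [CompleteSpace X]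
    (Y : Submodule ℝ X) (hYc : IsClosed (Y : Set X))
    (P : StrongDual ℝ X →L[ℝ] StrongDual ℝ X)
    (hproj : ∀ f : StrongDual ℝ X, P (P f) = P f)
    (hker : ∀ f : StrongDual ℝ X, P f = 0 ↔ ∀ y ∈ Y, f y = 0)
    (hL : ∀ f : StrongDual ℝ X, ‖f‖ = ‖P f‖ + ‖f - P f‖)
    (x : StrongDual ℝ X) (hx : ‖x‖ = 1) (hPx : P x = x)
    (hYpc : IsWStarWPC (x.comp Y.subtypeL)) :
    IsWStarWPC x :=
  isWStarWPC_of_isWStarWPC_of_MIdeal_general Y P hproj hker hL x hx hPx hYpc
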